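/- For integers n = 2m with m ≥ 1 and m−1 ≤ j ≤ n−1, the sum Σ_{k=1}^{n} (−1)^{j+k+m} C(n−k, m−k) C(j+1, k−1) equals 1 if j = m−1, and equals 0 if m ≤ j < n−1. -/

import Mathlib

/-!
Writing `binom` for the generalized binomial coefficient on `ℤ` (`Ring.choose`), one has
`C(m + d, d) = (-1)^d binom(-(m+1), d)`, so after the shift `i = k - 1` the sum is a
Chu–Vandermonde convolution and collapses to `(-1)^j binom(j - m, m - 1)`.
For `j = m - 1` this is `(-1)^(m-1) binom(-1, m - 1) = 1`; for `m ≤ j < 2m - 1` it is an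
ordinary binomial coefficient `C(j - m, m - 1)` with `j - m < m - 1`, hence `0`.
-/

/-- Binomial coefficient for integer arguments, with the convention that
`C a b = 0` when `b < 0` or `b > a`. -/
def C (a b : ℤ) : ℤ := if 0 ≤ b ∧ b ≤ a then (a.toNat.choose b.toNat : ℤ) else 0

open Finset

lemma C_natCast (a b : ℕ) : C a b = a.choose b := by
  by_cases h : b ≤ a
  · simp [C, h]
  · simp [C, Nat.choose_eq_zero_of_lt (not_le.mp h), h]

lemma C_of_neg {a b : ℤ} (h : b < 0) : C a b = 0 := by
  simp [C, not_le.mpr h]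

lemma Ring.choose_neg_natCast_succ (r k : ℕ) :
    Ring.choose (-(r + 1 : ℤ)) k = (-1) ^ k * (r + k).choose k := by
  rw [Ring.choose_neg, Units.smul_def, Int.coe_negOnePow_natCast, smul_eq_mul,
    show ((r : ℤ) + 1 + k - 1) = ((r + k : ℕ) : ℤ) by push_cast; ring, Ring.choose_natCast]

lemma sum_range_neg_one_pow_mul_choose_mul_add_choose (a r n : ℕ) :
    ∑ i ∈ range (n + 1), (-1 : ℤ) ^ (n - i) * a.choose i * (r + (n - i)).choose (n - i) =
      Ring.choose ((a : ℤ) - (r + 1)) n := by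
  rw [sub_eq_add_neg, Ring.add_choose_eq n (Commute.all _ _),
    Nat.sum_antidiagonal_eq_sum_range_succ
      (fun i k => Ring.choose (a : ℤ) i * Ring.choose (-(r + 1 : ℤ)) k)]
  refine sum_congr rfl fun i _ => ?_
  rw [Ring.choose_natCast, Ring.choose_neg_natCast_succ]
  ring

lemma alternating_sum_C_eq_ringChoose (m j : ℕ) (hm : 1 ≤ m) :
    ∑ k ∈ Icc 1 (2 * m),
        (-1 : ℤ) ^ (j + k + m) * C ((2 * m : ℤ) - k) ((m : ℤ) - k) * C ((j : ℤ) + 1) ((k : ℤ) - 1)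
      = (-1) ^ j * Ring.choose ((j : ℤ) - m) (m - 1) := by
  rw [← sum_subset (Icc_subset_Icc_right (by omega : m ≤ 2 * m)), ← Ico_add_one_right_eq_Icc,
    sum_Ico_eq_sum_range]
  · obtain ⟨n, rfl⟩ := Nat.exists_eq_add_of_le' hm
    rw [Nat.add_sub_cancel, Nat.add_sub_cancel,
      show (j : ℤ) - (n + 1 : ℕ) = (j + 1 : ℕ) - ((n + 1 : ℕ) + 1) by push_cast; ring,
      ← sum_range_neg_one_pow_mul_choose_mul_add_choose, mul_sum]
    refine sum_congr rfl fun k hk => ?_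
    obtain ⟨d, rfl⟩ := Nat.exists_eq_add_of_le (Nat.lt_succ_iff.mp (mem_range.mp hk))
    rw [show (2 * (k + d + 1 : ℕ) : ℤ) - (1 + k : ℕ) = (k + d + 1 + d : ℕ) by push_cast; ring,
      show ((k + d + 1 : ℕ) : ℤ) - (1 + k : ℕ) = (d : ℕ) by push_cast; ring,
      show (j : ℤ) + 1 = (j + 1 : ℕ) by push_cast; ring,
      show ((1 + k : ℕ) : ℤ) - 1 = (k : ℕ) by push_cast; ring,
      C_natCast, C_natCast, Nat.add_sub_cancel_left,
      show j + (1 + k) + (k + d + 1) = j + d + 2 * (k + 1) by ring, pow_add, pow_mul, neg_one_sq,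
      one_pow, mul_one, pow_add]
    ring
  · intro k hk hk'
    simp only [mem_Icc] at hk hk'
    rw [C_of_neg (by omega), mul_zero, zero_mul]

theorem alternating_sum_U_general (m j : ℕ) (hm : 1 ≤ m) :
    (j = m - 1 →
      ∑ k ∈ Finset.Icc 1 (2 * m),
        (-1 : ℤ) ^ (j + k + m) * C ((2 * m : ℤ) - k) ((m : ℤ) - k) * C ((j : ℤ) + 1) ((k : ℤ) - 1)
        = 1) ∧
    (m ≤ j → j < 2 * m - 1 →
      ∑ k ∈ Finset.Icc 1 (2 * m),
        (-1 : ℤ) ^ (j + k + m) * C ((2 * m : ℤ) - k) ((m : ℤ) - k) * C ((j : ℤ) + 1) ((k : ℤ) - 1)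
        = 0) := by
  rw [alternating_sum_C_eq_ringChoose m j hm]
  refine ⟨fun hj => ?_, fun hj hj' => ?_⟩
  · rw [show (j : ℤ) - m = -((0 : ℕ) + 1 : ℤ) by omega, Ring.choose_neg_natCast_succ, zero_add,
      Nat.choose_self, ← hj]
    simp [← mul_pow]
  · rw [show (j : ℤ) - m = (j - m : ℕ) by omega, Ring.choose_natCast,
      Nat.choose_eq_zero_of_lt (by omega)]
    simp

/-- For `n = 2m`, `m ≥ 1`, `m−1 ≤ j ≤ n−1`: the alternating sum
`∑_{k=1}^{n} (−1)^{j+k+m} C(n−k, m−k) C(j+1, k−1)` equals `1` if `j = m−1`,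
and equals `0` if `m ≤ j < n−1`. -/
theorem alternating_sum_U (m j : ℕ) (hm : 1 ≤ m) (hj1 : m - 1 ≤ j) (hj2 : j ≤ 2 * m - 1) :
    (j = m - 1 →
      ∑ k ∈ Finset.Icc 1 (2 * m),
        (-1 : ℤ) ^ (j + k + m) * C ((2 * m : ℤ) - k) ((m : ℤ) - k) * C ((j : ℤ) + 1) ((k : ℤ) - 1)
        = 1) ∧
    (m ≤ j → j < 2 * m - 1 →
      ∑ k ∈ Finset.Icc 1 (2 * m),
        (-1 : ℤ) ^ (j + k + m) * C ((2 * m : ℤ) - k) ((m : ℤ) - k) * C ((j : ℤ) + 1) ((k : ℤ) - 1)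
        = 0) :=
  alternating_sum_U_general m j hm
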